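/- For every integer m ≥ 0, the following identity of formal power series holds: Σ_{n≥0} a̅_{2m+1}(2n+1) q^n = 2 · f_2^{2m+2} f_8^2 / (f_1^{4m+4} f_4); that is, for every n ≥ 0, a̅_{2m+1}(2n+1) equals twice the coefficient of q^n in (q^2;q^2)_∞^{2m+2} (q^8;q^8)_∞^2 / ((q;q)_∞^{4m+4} (q^4;q^4)_∞). -/

import Mathlib

/-- The infinite product `(q^h; q^h)_∞ = ∏_{k ≥ 0} (1 - q^{h(k+1)})` as a formal power
series over `R`.  Since the factor `1 - q^{h(k+1)}` only affects coefficients of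
degree `≥ k + 1`, the coefficient of `qⁿ` is that of the finite truncated product
over `k < n + 1`. -/
noncomputable def qPochInf (R : Type*) [CommRing R] (h : ℕ) : PowerSeries R :=
  PowerSeries.mk fun n =>
    PowerSeries.coeff (R := R) n
      (∏ k ∈ Finset.range (n + 1), (1 - PowerSeries.X ^ (h * (k + 1))))

/-- `abar` is the generalized overcubic partition family: for every `c ≥ 1`,
`∑_{n≥0} a̅_c(n) qⁿ = f₄^(c-1) / (f₁² f₂^(2c-3))`, stated multiplied out (both sides
multiplied by `f₁² f₂^(2c-3) · f₂³ = f₁² f₂^(2c) / f₂³`, i.e. as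
`(∑ a̅_c(n) qⁿ) · f₁² · f₂^(2c) = f₄^(c-1) · f₂³`) so as to avoid the negative
exponent `2c - 3 = -1` occurring when `c = 1`; this is equivalent since the `fₕ`
are units in the ring of formal power series. -/
def IsGenOvercubic (abar : ℕ → ℕ → ℕ) : Prop :=
  ∀ c : ℕ, 1 ≤ c →
    (PowerSeries.mk fun n => (abar c n : ℤ)) * qPochInf ℤ 1 ^ 2 * qPochInf ℤ 2 ^ (2 * c) =
      qPochInf ℤ 4 ^ (c - 1) * qPochInf ℤ 2 ^ 3

/-!
Jacobi's triple product identity, proved in a finite form with Gaussian binomial coefficients and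
passed to the limit modulo `qⁿ`, gives `φ(q) = ∑_{k ∈ ℤ} q^{k²} = f₂⁵ / (f₁² f₄²)` and
`∑_{k ∈ ℤ} q^{2k(k+1)} = 2 f₈² / f₄`. By the first, the generating function of `a̅_{2m+1}` is
`f₄^{2m+2} φ(q) / f₂^{4m+4}`, in which `φ` is the only factor that is not a series in `q²`.
Its odd part is therefore `f₂^{2m+2} / f₁^{4m+4}` times the odd part of `φ`, and since
`(2t+1)² = 4t(t+1) + 1`, the odd part of `φ` is `∑_{t ∈ ℤ} q^{2t(t+1)}`.
-/

open PowerSeries Finset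

variable {R : Type*} [CommRing R]

theorem smodEq_X_pow_iff {n : ℕ} {f g : R⟦X⟧} :
    f ≡ g [SMOD Ideal.span {X ^ n}] ↔ ∀ i < n, coeff i f = coeff i g := by
  simp only [SModEq.sub_mem, Ideal.mem_span_singleton, X_pow_dvd_iff, map_sub, sub_eq_zero]

theorem eq_of_forall_smodEq {f g : R⟦X⟧} (h : ∀ n, f ≡ g [SMOD Ideal.span {X ^ n}]) :
    f = g :=
  ext fun i => smodEq_X_pow_iff.mp (h (i + 1)) i i.lt_succ_self

theorem smodEq_zero_of_X_pow_dvd {n : ℕ} {f : R⟦X⟧} (h : X ^ n ∣ f) :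
    f ≡ 0 [SMOD Ideal.span {X ^ n}] :=
  SModEq.zero.mpr (Ideal.mem_span_singleton.mpr h)

/-- The finite `q`-Pochhammer symbol `(x; x)_N`. -/
def qPoch (x : R) (N : ℕ) : R := ∏ i ∈ range N, (1 - x ^ (i + 1))

theorem qPoch_succ (x : R) (N : ℕ) : qPoch x (N + 1) = qPoch x N * (1 - x ^ (N + 1)) :=
  prod_range_succ _ _

theorem qPoch_two_mul (x : R) (N : ℕ) :
    qPoch x (2 * N) = (∏ l ∈ range N, (1 - x ^ (2 * l + 1))) * qPoch (x ^ 2) N := by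
  induction N with
  | zero => simp [qPoch]
  | succ N ih =>
    rw [show 2 * (N + 1) = 2 * N + 1 + 1 by ring, qPoch_succ, qPoch_succ, ih, qPoch_succ,
      prod_range_succ, ← pow_mul]
    ring_nf

theorem prod_one_add_pow_succ_mul_qPoch (x : R) (N : ℕ) :
    (∏ l ∈ range N, (1 + x ^ (l + 1))) * qPoch x N = qPoch (x ^ 2) N := by
  rw [qPoch, qPoch, ← prod_mul_distrib]
  exact prod_congr rfl fun l _ => by ring

theorem prod_one_add_odd_pow_mul_qPoch (x : R) (N : ℕ) :
    (∏ l ∈ range N, (1 + x * (x * x) ^ l)) * qPoch x (2 * N) * qPoch (x ^ 4) N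
      = qPoch (x ^ 2) (2 * N) * qPoch (x ^ 2) N := by
  have hodd : (∏ l ∈ range N, (1 + x * (x * x) ^ l)) * ∏ l ∈ range N, (1 - x ^ (2 * l + 1))
      = ∏ l ∈ range N, (1 - (x ^ 2) ^ (2 * l + 1)) := by
    rw [← prod_mul_distrib]
    exact prod_congr rfl fun l _ => by ring
  rw [qPoch_two_mul x, qPoch_two_mul (x ^ 2), ← pow_mul, ← hodd]
  ring

theorem prod_one_add_pow_mul_prod_mul_qPoch (x : R) (M : ℕ) :
    (∏ l ∈ range (M + 1), (1 + x * x ^ l)) * (∏ l ∈ range (M + 1), (1 + x ^ l))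
      * qPoch x (M + 1) * qPoch x M = 2 * qPoch (x ^ 2) (M + 1) * qPoch (x ^ 2) M := by
  rw [prod_range_succ' (fun l => 1 + x ^ l), ← prod_one_add_pow_succ_mul_qPoch,
    ← prod_one_add_pow_succ_mul_qPoch]
  simp only [← pow_succ']
  ring

section GaussBinom

variable (x : R)

/-- The Gaussian binomial coefficient `[n, k]_x`. -/
def gaussBinom : ℕ → ℕ → R
  | _, 0 => 1
  | 0, _ + 1 => 0
  | n + 1, k + 1 => gaussBinom n k + x ^ (k + 1) * gaussBinom n (k + 1)

@[simp]
theorem gaussBinom_zero_right (n : ℕ) : gaussBinom x n 0 = 1 := by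
  cases n <;> rfl

theorem gaussBinom_succ_succ (n k : ℕ) :
    gaussBinom x (n + 1) (k + 1) = gaussBinom x n k + x ^ (k + 1) * gaussBinom x n (k + 1) :=
  rfl

theorem gaussBinom_eq_zero_of_lt {n k : ℕ} (h : n < k) : gaussBinom x n k = 0 := by
  induction n generalizing k with
  | zero => obtain ⟨k, rfl⟩ := Nat.exists_eq_succ_of_ne_zero (by omega : k ≠ 0); rfl
  | succ n ih =>
    obtain ⟨k, rfl⟩ := Nat.exists_eq_succ_of_ne_zero (by omega : k ≠ 0)
    rw [gaussBinom_succ_succ, ih (by omega), ih (by omega), mul_zero, add_zero]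

@[simp]
theorem gaussBinom_self (n : ℕ) : gaussBinom x n n = 1 := by
  induction n with
  | zero => rfl
  | succ n ih => rw [gaussBinom_succ_succ, ih, gaussBinom_eq_zero_of_lt x n.lt_succ_self,
      mul_zero, add_zero]

/-- This holds for every `k`: when `n ≤ k` both sides vanish, the right one because the
truncated `n - k` is `0`. -/
theorem one_sub_pow_mul_gaussBinom_succ (n k : ℕ) :
    (1 - x ^ (k + 1)) * gaussBinom x n (k + 1) = (1 - x ^ (n - k)) * gaussBinom x n k := by
  induction n generalizing k with
  | zero => cases k <;> simp [gaussBinom]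
  | succ n ih =>
    cases k with
    | zero =>
      have := ih 0
      simp only [zero_add, pow_one, Nat.sub_zero, gaussBinom_zero_right, mul_one] at this ⊢
      rw [gaussBinom_succ_succ, gaussBinom_zero_right]
      linear_combination x * this
    | succ k =>
      rw [gaussBinom_succ_succ, gaussBinom_succ_succ, show n + 1 - (k + 1) = n - k by omega]
      have hpow : x ^ (k + 2) * x ^ (n - (k + 1)) * gaussBinom x n (k + 1)
          = x ^ (k + 1) * x ^ (n - k) * gaussBinom x n (k + 1) := by
        rcases Nat.lt_or_ge n (k + 1) with hn | hn
        · simp [gaussBinom_eq_zero_of_lt x hn]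
        · rw [← pow_add, ← pow_add, show k + 2 + (n - (k + 1)) = k + 1 + (n - k) by omega]
      linear_combination x ^ (k + 2) * ih (k + 1) + ih k - hpow

theorem gaussBinom_succ_succ' (n k : ℕ) :
    gaussBinom x (n + 1) (k + 1) = x ^ (n - k) * gaussBinom x n k + gaussBinom x n (k + 1) := by
  linear_combination gaussBinom_succ_succ x n k - one_sub_pow_mul_gaussBinom_succ x n k

theorem gaussBinom_mul_qPoch {n k : ℕ} (hk : k ≤ n) :
    gaussBinom x n k * qPoch x k * qPoch x (n - k) = qPoch x n := by
  induction n generalizing k with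
  | zero =>
    obtain rfl : k = 0 := by omega
    simp [qPoch]
  | succ n ih =>
    cases k with
    | zero => simp [qPoch]
    | succ k =>
      rcases Nat.lt_or_ge k n with hkn | hkn
      · obtain ⟨j, rfl⟩ : ∃ j, n = k + 1 + j := ⟨n - (k + 1), by omega⟩
        have h1 := ih (k := k) (by omega)
        have h2 := ih (k := k + 1) (by omega)
        rw [show k + 1 + j - k = j + 1 by omega, qPoch_succ] at h1
        rw [show k + 1 + j - (k + 1) = j by omega, qPoch_succ] at h2
        rw [gaussBinom_succ_succ, qPoch_succ, qPoch_succ,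
          show k + 1 + j + 1 - (k + 1) = j + 1 by omega, qPoch_succ]
        linear_combination (1 - x ^ (k + 1)) * h1 + x ^ (k + 1) * (1 - x ^ (j + 1)) * h2
      · obtain rfl : n = k := by omega
        simp [qPoch]

theorem sum_range_mul_gaussBinom_succ (w : ℕ → R) (n : ℕ) :
    ∑ p ∈ range (n + 2), w p * gaussBinom x (n + 1) p
      = ∑ p ∈ range (n + 1), (w (p + 1) + x ^ p * w p) * gaussBinom x n p := by
  have htop : gaussBinom x n (n + 1) = 0 := gaussBinom_eq_zero_of_lt x (Nat.lt_succ_self n)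
  simp only [sum_range_succ' _ (n + 1), gaussBinom_succ_succ, gaussBinom_zero_right, mul_add,
    add_mul, sum_add_distrib]
  rw [sum_range_succ (fun k => w (k + 1) * (x ^ (k + 1) * gaussBinom x n (k + 1))),
    sum_range_succ' (fun p => x ^ p * w p * gaussBinom x n p)]
  simp only [htop, pow_zero, mul_zero, add_zero, one_mul, mul_one, gaussBinom_zero_right]
  ac_rfl

theorem sum_range_mul_gaussBinom_succ' (w : ℕ → R) (n : ℕ) :
    ∑ p ∈ range (n + 2), w p * gaussBinom x (n + 1) p
      = ∑ p ∈ range (n + 1), (w p + x ^ (n - p) * w (p + 1)) * gaussBinom x n p := by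
  have htop : gaussBinom x n (n + 1) = 0 := gaussBinom_eq_zero_of_lt x (Nat.lt_succ_self n)
  simp only [sum_range_succ' _ (n + 1), gaussBinom_succ_succ', gaussBinom_zero_right, mul_add,
    add_mul, sum_add_distrib]
  rw [sum_range_succ (fun k => w (k + 1) * gaussBinom x n (k + 1)),
    sum_range_succ' (fun p => w p * gaussBinom x n p)]
  simp only [htop, mul_zero, add_zero, mul_one, gaussBinom_zero_right]
  ac_rfl

end GaussBinom

/-- Note that `triangular (-k) = k (k - 1) / 2`. -/
def triangular (k : ℤ) : ℕ := (k * (k + 1) / 2).toNat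

theorem two_mul_natCast_triangular (k : ℤ) : 2 * (triangular k : ℤ) = k * (k + 1) := by
  have hnonneg : 0 ≤ k * (k + 1) := by nlinarith [sq_nonneg (2 * k + 1)]
  rw [triangular, Int.toNat_of_nonneg (Int.ediv_nonneg hnonneg two_pos.le),
    Int.mul_ediv_cancel' (Int.even_mul_succ_self k).two_dvd]

theorem natCast_triangular_add_one (k : ℤ) :
    (triangular (k + 1) : ℤ) = triangular k + k + 1 := by
  linarith [two_mul_natCast_triangular k, two_mul_natCast_triangular (k + 1)]

theorem natCast_triangular_add_triangular_neg (k : ℤ) :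
    (triangular k : ℤ) + triangular (-k) = k * k := by
  linarith [two_mul_natCast_triangular k, two_mul_natCast_triangular (-k)]

theorem natAbs_le_triangular_add_one (k : ℤ) : k.natAbs ≤ triangular k + 1 := by
  have := two_mul_natCast_triangular k
  rcases le_or_gt 0 k with hk | hk
  · zify; rw [abs_of_nonneg hk]; nlinarith
  · zify; rw [abs_of_neg hk]; nlinarith

theorem natAbs_le_mul_triangular_add_mul_triangular_neg_add_one {i j : ℕ} (hij : 0 < i + j)
    (k : ℤ) :
    k.natAbs ≤ i * triangular k + j * triangular (-k) + 1 := by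
  rcases Nat.eq_zero_or_pos i with rfl | hi
  · have := natAbs_le_triangular_add_one (-k)
    rw [Int.natAbs_neg] at this
    nlinarith
  · have := natAbs_le_triangular_add_one k
    nlinarith

/-- The finite Jacobi triple product sum `∑_{k=-M}^{N} a^{k(k+1)/2} b^{k(k-1)/2} [N+M, M+k]_{ab}`,
indexed by `p = M + k`. -/
def tripleProductSum (a b : R) (N M : ℕ) : R :=
  ∑ p ∈ range (N + M + 1),
    a ^ triangular (p - M) * b ^ triangular (M - p) * gaussBinom (a * b) (N + M) p

theorem tripleProductSum_succ_left (a b : R) (N M : ℕ) :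
    tripleProductSum a b (N + 1) M = (1 + a * (a * b) ^ N) * tripleProductSum a b N M := by
  rw [tripleProductSum, show N + 1 + M = N + M + 1 by ring, sum_range_mul_gaussBinom_succ',
    tripleProductSum, mul_sum]
  refine sum_congr rfl fun p hp => ?_
  have hp := mem_range.mp hp
  have ha : triangular ((p + 1 : ℕ) - M) + (N + M - p) = triangular (p - M) + (N + 1) := by
    have := natCast_triangular_add_one ((p : ℤ) - M)
    push_cast at this ⊢
    rw [show (p : ℤ) + 1 - M = p - M + 1 by ring]
    omega
  have hb : triangular (M - (p + 1 : ℕ)) + (N + M - p) = triangular (M - p) + N := by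
    have := natCast_triangular_add_one ((M : ℤ) - (p + 1))
    push_cast at this ⊢
    rw [show (M : ℤ) - (p + 1) + 1 = M - p by ring] at this
    omega
  rw [show ∀ e₁ e₂ d, (a * b) ^ d * (a ^ e₁ * b ^ e₂) = a ^ (e₁ + d) * b ^ (e₂ + d) from
    fun _ _ _ => by ring, ha, hb]
  ring

theorem tripleProductSum_succ_right (a b : R) (N M : ℕ) :
    tripleProductSum a b N (M + 1) = (1 + b * (a * b) ^ M) * tripleProductSum a b N M := by
  rw [tripleProductSum, show N + (M + 1) = N + M + 1 by ring, sum_range_mul_gaussBinom_succ,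
    tripleProductSum, mul_sum]
  refine sum_congr rfl fun p _ => ?_
  have ha : p + triangular (p - (M + 1 : ℕ)) = triangular (p - M) + M := by
    have := natCast_triangular_add_one ((p : ℤ) - (M + 1))
    push_cast at this ⊢
    rw [show (p : ℤ) - (M + 1) + 1 = p - M by ring] at this
    omega
  have hb : p + triangular ((M + 1 : ℕ) - p) = triangular (M - p) + (M + 1) := by
    have := natCast_triangular_add_one ((M : ℤ) - p)
    push_cast at this ⊢
    rw [show (M : ℤ) + 1 - p = M - p + 1 by ring]
    omega
  have hshift : ((p + 1 : ℕ) : ℤ) - (M + 1 : ℕ) = p - M ∧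
      ((M + 1 : ℕ) : ℤ) - (p + 1 : ℕ) = M - p := by
    constructor <;> push_cast <;> ring
  rw [hshift.1, hshift.2, show ∀ e₁ e₂ d, (a * b) ^ d * (a ^ e₁ * b ^ e₂) = a ^ (d + e₁) * b ^ (d + e₂) from
    fun _ _ _ => by ring, ha, hb]
  ring

theorem tripleProductSum_eq_prod (a b : R) (N M : ℕ) :
    tripleProductSum a b N M
      = (∏ l ∈ range N, (1 + a * (a * b) ^ l)) * ∏ l ∈ range M, (1 + b * (a * b) ^ l) := by
  induction N with
  | zero =>
    induction M with
    | zero => simp [tripleProductSum, triangular]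
    | succ M ih => rw [tripleProductSum_succ_right, ih, prod_range_succ]; ring
  | succ N ih => rw [tripleProductSum_succ_left, ih, prod_range_succ]; ring

theorem qPoch_smodEq_of_le {x : R⟦X⟧} (hx : X ∣ x) {n N M : ℕ} (hn : n ≤ N) (hNM : N ≤ M) :
    qPoch x M ≡ qPoch x N [SMOD Ideal.span {X ^ n}] := by
  induction M, hNM using Nat.le_induction with
  | base => rfl
  | succ M hNM ih =>
    have hfactor : 1 - x ^ (M + 1) ≡ 1 [SMOD Ideal.span {X ^ n}] := by
      rw [SModEq.sub_mem, Ideal.mem_span_singleton, sub_sub_cancel_left, dvd_neg]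
      exact (pow_dvd_pow X (by omega)).trans (pow_dvd_pow_of_dvd hx _)
    simpa [qPoch_succ] using ih.mul hfactor

theorem qPoch_X_pow (h N : ℕ) :
    qPoch (X ^ h : R⟦X⟧) N = ∏ k ∈ range N, (1 - X ^ (h * (k + 1))) := by
  simp only [qPoch, pow_mul]

theorem qPochInf_smodEq {h : ℕ} (hh : h ≠ 0) {n N : ℕ} (hN : n ≤ N) :
    qPochInf R h ≡ qPoch (X ^ h) N [SMOD Ideal.span {X ^ n}] := by
  have hX : (X : R⟦X⟧) ∣ X ^ h := dvd_pow_self X hh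
  refine smodEq_X_pow_iff.mpr fun i hi => ?_
  rw [qPochInf, coeff_mk, ← qPoch_X_pow]
  exact smodEq_X_pow_iff.mp (qPoch_smodEq_of_le hX le_rfl (by omega)).symm i i.lt_succ_self

theorem constantCoeff_qPochInf {h : ℕ} (hh : h ≠ 0) : constantCoeff (qPochInf R h) = 1 := by
  rw [← coeff_zero_eq_constantCoeff_apply, qPochInf, coeff_mk]
  simp [hh]

theorem isUnit_qPochInf {h : ℕ} (hh : h ≠ 0) : IsUnit (qPochInf R h) :=
  isUnit_iff_constantCoeff.mpr (by rw [constantCoeff_qPochInf hh]; exact isUnit_one)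

theorem gaussBinom_mul_qPochInf_smodEq {h : ℕ} (hh : h ≠ 0) {n m k : ℕ} (hk : k ≤ m)
    (hnk : n ≤ k) (hnm : n ≤ m - k) :
    gaussBinom (X ^ h : R⟦X⟧) m k * qPochInf R h ≡ 1 [SMOD Ideal.span {X ^ n}] := by
  obtain ⟨v, hv⟩ := (isUnit_qPochInf (R := R) hh).exists_right_inv
  have hsq : gaussBinom (X ^ h : R⟦X⟧) m k * qPochInf R h * qPochInf R h
      ≡ qPochInf R h [SMOD Ideal.span {X ^ n}] := by
    have := ((SModEq.refl (gaussBinom (X ^ h : R⟦X⟧) m k)).mul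
      (qPochInf_smodEq (R := R) hh hnk)).mul (qPochInf_smodEq (R := R) hh hnm)
    rw [gaussBinom_mul_qPoch _ hk] at this
    exact this.trans (qPochInf_smodEq hh (by omega)).symm
  have := hsq.mul (SModEq.refl v)
  rwa [mul_assoc _ (qPochInf R h) v, hv, mul_one] at this

theorem SModEq.expand {n p : ℕ} (hp : p ≠ 0) {f g : R⟦X⟧}
    (h : f ≡ g [SMOD Ideal.span {X ^ n}]) :
    expand p hp f ≡ expand p hp g [SMOD Ideal.span {X ^ n}] := by
  rw [SModEq.sub_mem, Ideal.mem_span_singleton] at h ⊢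
  have := map_dvd (PowerSeries.expand p hp) h
  rw [map_pow, expand_X, ← pow_mul, map_sub] at this
  exact (pow_dvd_pow X (Nat.le_mul_of_pos_left n (Nat.pos_of_ne_zero hp))).trans this

theorem expand_qPochInf {p : ℕ} (hp : p ≠ 0) {h : ℕ} (hh : h ≠ 0) :
    expand p hp (qPochInf R h) = qPochInf R (p * h) := by
  refine eq_of_forall_smodEq fun n => ?_
  have hexp : expand p hp (qPoch (X ^ h) n) = qPoch (X ^ (p * h) : R⟦X⟧) n := by
    simp only [qPoch, map_prod, map_sub, map_one, map_pow, expand_X, ← pow_mul]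
    exact prod_congr rfl fun _ _ => by ring_nf
  calc expand p hp (qPochInf R h)
      ≡ expand p hp (qPoch (X ^ h) n) [SMOD Ideal.span {X ^ n}] :=
        (qPochInf_smodEq hh le_rfl).expand hp
    _ = qPoch (X ^ (p * h)) n := hexp
    _ ≡ qPochInf R (p * h) [SMOD Ideal.span {X ^ n}] :=
        (qPochInf_smodEq (mul_ne_zero hp hh) le_rfl).symm

theorem map_qPochInf {S : Type*} [CommRing S] (f : R →+* S) (h : ℕ) :
    map f (qPochInf R h) = qPochInf S h := by
  ext n
  rw [coeff_map, qPochInf, qPochInf, coeff_mk, coeff_mk, ← coeff_map]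
  simp [map_prod]

variable (R) in
/-- Ramanujan's theta function `f(qⁱ, qʲ) = ∑_{k ∈ ℤ} q^{i k(k+1)/2 + j k(k-1)/2}`. -/
noncomputable def theta (i j : ℕ) : R⟦X⟧ :=
  mk fun n => ({k : ℤ | i * triangular k + j * triangular (-k) = n}.ncard : R)

theorem coeff_sum_X_pow {ι : Type*} (s : Finset ι) (e : ι → ℕ) (m : ℕ) :
    coeff m (∑ k ∈ s, (X : R⟦X⟧) ^ e k) = #{k ∈ s | e k = m} := by
  simp [coeff_X_pow, sum_boole, eq_comm]

theorem theta_smodEq_sum {i j : ℕ} (hij : 0 < i + j) {n K : ℕ} (hK : n ≤ K) :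
    theta R i j ≡ ∑ k ∈ Icc (-K : ℤ) K, X ^ (i * triangular k + j * triangular (-k))
      [SMOD Ideal.span {X ^ n}] := by
  refine smodEq_X_pow_iff.mpr fun m hm => ?_
  rw [theta, coeff_mk, coeff_sum_X_pow, ← Set.ncard_coe_finset]
  congr 2
  ext k
  have := natAbs_le_mul_triangular_add_mul_triangular_neg_add_one hij k
  simp only [Set.mem_ofPred_eq, coe_filter, mem_Icc]
  constructor
  · intro hk; omega
  · exact fun hk => hk.2

theorem sum_range_sub_eq_sum_Icc {M : Type*} [AddCommMonoid M] (f : ℤ → M) (N : ℕ) :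
    ∑ p ∈ range (2 * N + 1), f (p - N) = ∑ k ∈ Icc (-N : ℤ) N, f k := by
  refine sum_nbij' (fun p => p - N) (fun k => (k + N).toNat) ?_ ?_ ?_ ?_ (fun _ _ => rfl) <;>
    intro a ha <;> simp only [mem_range, mem_Icc] at ha ⊢ <;> omega

/-- Jacobi's triple product identity `f(a, b) = (-a; ab)_∞ (-b; ab)_∞ (ab; ab)_∞` for `a = qⁱ`,
`b = qʲ`, as a congruence modulo `qⁿ` with the partial products. -/
theorem theta_smodEq_prod {i j : ℕ} (hij : 0 < i + j) {n N : ℕ} (hN : 2 * n ≤ N) :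
    theta R i j ≡ (∏ l ∈ range N, (1 + X ^ i * (X ^ i * X ^ j) ^ l))
      * (∏ l ∈ range N, (1 + X ^ j * (X ^ i * X ^ j) ^ l)) * qPochInf R (i + j)
      [SMOD Ideal.span {X ^ n}] := by
  rw [← tripleProductSum_eq_prod, tripleProductSum, sum_mul, show N + N = 2 * N by ring,
    ← pow_add]
  refine (theta_smodEq_sum hij (K := N) (by omega)).trans ?_
  rw [← sum_range_sub_eq_sum_Icc]
  -- Near the ends of the range the weight `q^e` has `e ≥ n`; elsewhere both `p` and `2N - p`
  -- are at least `n`, so `[2N, p]` is congruent to the inverse of `(q^{i+j}; q^{i+j})_∞`.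
  refine SModEq.sum fun p hp => ?_
  have hp := mem_range.mp hp
  rw [← neg_sub (p : ℤ), ← pow_mul, ← pow_mul, ← pow_add, mul_assoc]
  by_cases hgood : n ≤ p ∧ n ≤ 2 * N - p
  · conv_lhs => rw [← mul_one (X ^ _)]
    exact SModEq.rfl.mul
      (gaussBinom_mul_qPochInf_smodEq (by omega) (by omega) hgood.1 hgood.2).symm
  · have he : n ≤ i * triangular (p - N) + j * triangular (-(p - N)) := by
      have := natAbs_le_mul_triangular_add_mul_triangular_neg_add_one hij ((p : ℤ) - N)
      omega
    exact (smodEq_zero_of_X_pow_dvd (pow_dvd_pow X he)).trans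
      (smodEq_zero_of_X_pow_dvd ((pow_dvd_pow X he).mul_right _)).symm

variable (R) in
theorem theta_one_one_mul_qPochInf :
    theta R 1 1 * qPochInf R 1 ^ 2 * qPochInf R 4 ^ 2 = qPochInf R 2 ^ 5 := by
  refine eq_of_forall_smodEq fun n => ?_
  have hθ := theta_smodEq_prod (R := R) (i := 1) (j := 1) (by norm_num) (N := 2 * n) le_rfl
  simp only [pow_one, Nat.reduceAdd] at hθ
  have h1 : qPochInf R 1 ≡ qPoch X (2 * (2 * n)) [SMOD Ideal.span {X ^ n}] := by
    simpa using qPochInf_smodEq (R := R) one_ne_zero (N := 2 * (2 * n)) (by omega)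
  have h4 : qPochInf R 4 ≡ qPoch (X ^ 4) (2 * n) [SMOD Ideal.span {X ^ n}] :=
    qPochInf_smodEq (R := R) (by norm_num) (by omega)
  have h2 : qPochInf R 2 ≡ qPoch (X ^ 2) (2 * (2 * n)) [SMOD Ideal.span {X ^ n}] :=
    qPochInf_smodEq (R := R) (by norm_num) (by omega)
  have h2' : qPochInf R 2 ≡ qPoch (X ^ 2) (2 * n) [SMOD Ideal.span {X ^ n}] :=
    qPochInf_smodEq (R := R) (by norm_num) (by omega)
  set P := ∏ l ∈ range (2 * n), (1 + X * (X * X : R⟦X⟧) ^ l)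
  calc theta R 1 1 * qPochInf R 1 ^ 2 * qPochInf R 4 ^ 2
      ≡ P * P * qPochInf R 2 * qPoch X (2 * (2 * n)) ^ 2 * qPoch (X ^ 4) (2 * n) ^ 2
        [SMOD Ideal.span {X ^ n}] := (hθ.mul (h1.pow 2)).mul (h4.pow 2)
    _ = (P * qPoch X (2 * (2 * n)) * qPoch (X ^ 4) (2 * n)) ^ 2 * qPochInf R 2 := by ring
    _ = (qPoch (X ^ 2) (2 * (2 * n)) * qPoch (X ^ 2) (2 * n)) ^ 2 * qPochInf R 2 := by
        rw [prod_one_add_odd_pow_mul_qPoch]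
    _ ≡ (qPochInf R 2 * qPochInf R 2) ^ 2 * qPochInf R 2 [SMOD Ideal.span {X ^ n}] :=
        ((h2.symm.mul h2'.symm).pow 2).mul SModEq.rfl
    _ = qPochInf R 2 ^ 5 := by ring

variable (R) in
theorem theta_zero_right_mul_qPochInf {h : ℕ} (hh : h ≠ 0) :
    theta R h 0 * qPochInf R h = 2 * qPochInf R (2 * h) ^ 2 := by
  refine eq_of_forall_smodEq fun n => ?_
  have hθ := theta_smodEq_prod (R := R) (i := h) (j := 0) (by omega) (n := n) (N := 2 * n + 1)
    (by omega)
  simp only [pow_zero, mul_one, one_mul, add_zero] at hθ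
  have hsq : (X ^ h : R⟦X⟧) ^ 2 = X ^ (2 * h) := by rw [← pow_mul, mul_comm]
  have hf : ∀ N, n ≤ N → qPochInf R h ≡ qPoch (X ^ h) N [SMOD Ideal.span {X ^ n}] :=
    fun N hN => qPochInf_smodEq hh hN
  have hf2 : ∀ N, n ≤ N →
      qPochInf R (2 * h) ≡ qPoch ((X ^ h) ^ 2) N [SMOD Ideal.span {X ^ n}] :=
    fun N hN => hsq ▸ qPochInf_smodEq (by omega) hN
  set P := (∏ l ∈ range (2 * n + 1), (1 + X ^ h * (X ^ h : R⟦X⟧) ^ l))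
    * ∏ l ∈ range (2 * n + 1), (1 + (X ^ h : R⟦X⟧) ^ l)
  calc theta R h 0 * qPochInf R h
      ≡ P * qPochInf R h * qPochInf R h [SMOD Ideal.span {X ^ n}] := hθ.mul SModEq.rfl
    _ ≡ P * qPoch (X ^ h) (2 * n + 1) * qPoch (X ^ h) (2 * n) [SMOD Ideal.span {X ^ n}] :=
        (SModEq.rfl.mul (hf _ (by omega))).mul (hf _ (by omega))
    _ = 2 * qPoch ((X ^ h) ^ 2) (2 * n + 1) * qPoch ((X ^ h) ^ 2) (2 * n) :=
        prod_one_add_pow_mul_prod_mul_qPoch _ _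
    _ ≡ 2 * qPochInf R (2 * h) * qPochInf R (2 * h) [SMOD Ideal.span {X ^ n}] :=
        (SModEq.rfl.mul (hf2 _ (by omega)).symm).mul (hf2 (2 * n) (by omega)).symm
    _ = 2 * qPochInf R (2 * h) ^ 2 := by ring

noncomputable def oddPart (f : R⟦X⟧) : R⟦X⟧ := mk fun n => coeff (2 * n + 1) f

theorem oddPart_expand_two_mul (u v : R⟦X⟧) :
    oddPart (expand 2 two_ne_zero u * v) = u * oddPart v := by
  ext n
  simp only [oddPart, coeff_mk, coeff_mul]
  symm
  refine sum_of_injOn (fun ab => (2 * ab.1, 2 * ab.2 + 1)) ?_ ?_ ?_ ?_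
  · intro ab _ cd _ h
    simp only [Prod.mk.injEq] at h
    ext <;> omega
  · intro ab hab
    simp only [mem_coe, HasAntidiagonal.mem_antidiagonal] at hab ⊢
    omega
  · intro ij hij himage
    simp only [HasAntidiagonal.mem_antidiagonal] at hij
    have hodd : ¬ 2 ∣ ij.1 := by
      rintro ⟨a, ha⟩
      exact himage ⟨(a, n - a), by simp only [mem_coe, HasAntidiagonal.mem_antidiagonal]; omega,
        by ext <;> simp <;> omega⟩
    rw [coeff_expand_of_not_dvd _ _ _ hodd, zero_mul]
  · intro ab _
    simp only [coeff_expand_mul]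

theorem oddPart_theta_one_one : oddPart (theta R 1 1) = theta R 4 0 := by
  ext n
  simp only [oddPart, theta, coeff_mk]
  have hinj : Function.Injective fun t : ℤ => 2 * t + 1 := fun a b h => by simpa using h
  rw [← Set.ncard_image_of_injective {t : ℤ | 4 * triangular t + 0 * triangular (-t) = n} hinj]
  congr 2
  ext k
  simp only [Set.mem_image, Set.mem_ofPred_eq, one_mul, zero_mul, add_zero]
  constructor
  · intro h
    have hk : k * k = 2 * n + 1 := by
      rw [← natCast_triangular_add_triangular_neg]; exact_mod_cast h
    obtain ⟨t, rfl⟩ : Odd k := (Int.odd_mul.mp ⟨n, hk⟩).1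
    refine ⟨t, ?_, rfl⟩
    have := two_mul_natCast_triangular t
    zify
    nlinarith
  · rintro ⟨t, ht, rfl⟩
    have := two_mul_natCast_triangular t
    have := natCast_triangular_add_triangular_neg (2 * t + 1)
    zify at ht ⊢
    nlinarith

theorem mul_qPochInf_eq_theta {A : R⟦X⟧} {m : ℕ}
    (hA : A * qPochInf R 1 ^ 2 * qPochInf R 2 ^ (4 * m + 2)
      = qPochInf R 4 ^ (2 * m) * qPochInf R 2 ^ 3) :
    A * qPochInf R 2 ^ (4 * m + 4) = qPochInf R 4 ^ (2 * m + 2) * theta R 1 1 := by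
  have hunit : IsUnit (qPochInf R 1 ^ 2 * qPochInf R 4 ^ 2) :=
    ((isUnit_qPochInf one_ne_zero).pow 2).mul ((isUnit_qPochInf (by norm_num)).pow 2)
  rw [← hunit.mul_left_inj]
  linear_combination (qPochInf R 2 ^ 2 * qPochInf R 4 ^ 2) * hA
    - qPochInf R 4 ^ (2 * m + 2) * theta_one_one_mul_qPochInf R

theorem oddPart_mul_qPochInf_eq {A : R⟦X⟧} {m : ℕ}
    (hA : A * qPochInf R 1 ^ 2 * qPochInf R 2 ^ (4 * m + 2)
      = qPochInf R 4 ^ (2 * m) * qPochInf R 2 ^ 3) :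
    oddPart A * (qPochInf R 1 ^ (4 * m + 4) * qPochInf R 4)
      = 2 * (qPochInf R 2 ^ (2 * m + 2) * qPochInf R 8 ^ 2) := by
  have h2 : expand 2 two_ne_zero (qPochInf R 1) = qPochInf R 2 := expand_qPochInf _ one_ne_zero
  have h4 : expand 2 two_ne_zero (qPochInf R 2) = qPochInf R 4 := expand_qPochInf _ two_ne_zero
  have hexpand := congrArg oddPart (mul_qPochInf_eq_theta hA)
  rw [mul_comm A, ← h2, ← h4, ← map_pow, ← map_pow, oddPart_expand_two_mul,
    oddPart_expand_two_mul, oddPart_theta_one_one] at hexpand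
  linear_combination qPochInf R 4 * hexpand
    + qPochInf R 2 ^ (2 * m + 2) * theta_zero_right_mul_qPochInf R (h := 4) (by norm_num)

/-- For every `m ≥ 0`, the identity of formal power series
`∑_{n≥0} a̅_{2m+1}(2n+1) qⁿ = 2 f₂^(2m+2) f₈² / (f₁^(4m+4) f₄)` holds, i.e. for
every `n ≥ 0`, `a̅_{2m+1}(2n+1)` equals twice the coefficient of `qⁿ` in
`(q²;q²)_∞^(2m+2) (q⁸;q⁸)_∞² / ((q;q)_∞^(4m+4) (q⁴;q⁴)_∞)` (the quotient is taken
in the ring of formal power series over `ℚ`, where the denominator is invertible). -/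
theorem overcubic_odd_gen_fun (abar : ℕ → ℕ → ℕ) (habar : IsGenOvercubic abar)
    (m : ℕ) :
    (PowerSeries.mk fun n => (abar (2 * m + 1) (2 * n + 1) : ℚ)) =
      2 * (qPochInf ℚ 2 ^ (2 * m + 2) * qPochInf ℚ 8 ^ 2 *
        (qPochInf ℚ 1 ^ (4 * m + 4) * qPochInf ℚ 4)⁻¹) := by
  set A : ℚ⟦X⟧ := mk fun n => (abar (2 * m + 1) n : ℚ)
  have hmap : map (Int.castRingHom ℚ) (mk fun n => (abar (2 * m + 1) n : ℤ)) = A := by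
    ext n; simp [A, coeff_map]
  have hA : A * qPochInf ℚ 1 ^ 2 * qPochInf ℚ 2 ^ (4 * m + 2)
      = qPochInf ℚ 4 ^ (2 * m) * qPochInf ℚ 2 ^ 3 := by
    have := congrArg (map (Int.castRingHom ℚ)) (habar (2 * m + 1) (by omega))
    simpa only [map_mul, map_pow, map_qPochInf, hmap, Nat.add_sub_cancel,
      show 2 * (2 * m + 1) = 4 * m + 2 by ring] using this
  have hodd : (mk fun n => (abar (2 * m + 1) (2 * n + 1) : ℚ)) = oddPart A := by
    ext n; simp [A, oddPart]
  have hunit : constantCoeff (qPochInf ℚ 1 ^ (4 * m + 4) * qPochInf ℚ 4) ≠ 0 := by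
    simp [constantCoeff_qPochInf]
  rw [hodd, ← mul_assoc, eq_mul_inv_iff_mul_eq hunit]
  linear_combination oddPart_mul_qPochInf_eq hA
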